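/- arXiv:2201.01285 — 2 statements merged into one kernel-verified Lean document; each statement's English description precedes it below -/
import Mathlib

section
/- Let $T$ be a string of length $n$ with suffix array $\mathrm{SA}$. For every position $j \in [1..n]$ and every $\ell \ge 1$, the number of indices $j' \in [1..n]$ with $T[j'..n] \prec T[j..n]$ and $\mathrm{LCE}_T(j',j) < \ell$ equals the number of positions $j' \in [1..n]$ with $T^\infty[j'..j'+\ell) \prec T^\infty[j..j+\ell)$. -/
/-- Length of the longest common prefix of two lists. -/
def lcpLen {α : Type*} [DecidableEq α] : List α → List α → ℕ
  | a :: s, b :: t => if a = b then lcpLen s t + 1 else 0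
  | _, _ => 0

/-- The fragment `T[a..a+len)` of a (1-indexed) text `T : ℕ → α`. -/
def frag {α : Type*} (T : ℕ → α) (a len : ℕ) : List α :=
  (List.range len).map (fun t => T (a + t))

/-- The suffix `T[j..n]` of a text of length `n`. -/
def suff {α : Type*} (T : ℕ → α) (n j : ℕ) : List α := frag T j (n + 1 - j)

/-- The fragment `T^∞[j..j+ℓ)` of the infinite periodic extension of `T[1..n]`. -/
def tinf {α : Type*} (T : ℕ → α) (n j ℓ : ℕ) : List α :=
  (List.range ℓ).map (fun t => T ((j + t - 1) % n + 1))

/-- `p` is a period of the list `X`. -/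
def hasPer {α : Type*} (X : List α) (p : ℕ) : Prop :=
  ∀ i, i + p < X.length → X[i]? = X[i + p]?

/-- The shortest period of a list. -/
noncomputable def per {α : Type*} (X : List α) : ℕ := sInf {p | 1 ≤ p ∧ hasPer X p}

/-- `runEnd S n i p` is the maximal `e ≤ n+1` such that `S[i..e)` has period `p`,
i.e. `S[i..runEnd S n i p)` is the longest prefix of `S[i..n]` with period `p`. -/
noncomputable def runEnd {α : Type*} (S : ℕ → α) (n i p : ℕ) : ℕ :=
  sSup {e | i ≤ e ∧ e ≤ n + 1 ∧ ∀ t, i ≤ t → t + p < e → S t = S (t + p)}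

lemma lcpLen_nil {α : Type*} [DecidableEq α] (Y : List α) : lcpLen [] Y = 0 := by
  cases Y <;> rfl

lemma lcpLen_comm {α : Type*} [DecidableEq α] : ∀ X Y : List α, lcpLen X Y = lcpLen Y X
  | [], [] => rfl
  | [], _ :: _ => rfl
  | _ :: _, [] => rfl
  | a :: s, b :: t => by
      by_cases h : a = b
      · subst h; simp [lcpLen, lcpLen_comm s t]
      · simp [lcpLen, h, Ne.symm h]

lemma lcpLen_le {α : Type*} [DecidableEq α] :
    ∀ X Y : List α, lcpLen X Y ≤ X.length ∧ lcpLen X Y ≤ Y.length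
  | [], Y => by simp [lcpLen_nil]
  | _ :: _, [] => by simp [lcpLen]
  | a :: s, b :: t => by
      by_cases h : a = b
      · have := lcpLen_le s t
        simp [lcpLen, h]; omega
      · simp [lcpLen, h]

lemma lcpLen_getElem_eq {α : Type*} [DecidableEq α] :
    ∀ (X Y : List α) (k : ℕ), k < lcpLen X Y → X[k]? = Y[k]?
  | [], Y, k, hk => by simp [lcpLen_nil] at hk
  | _ :: _, [], k, hk => by simp [lcpLen] at hk
  | a :: s, b :: t, k, hk => by
      by_cases h : a = b
      · subst h
        cases k with
        | zero => simp
        | succ m =>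
            rw [lcpLen, if_pos rfl] at hk
            simpa using lcpLen_getElem_eq s t m (by omega)
      · simp [lcpLen, h] at hk

lemma lcpLen_getElem_ne {α : Type*} [DecidableEq α] :
    ∀ (X Y : List α), lcpLen X Y < X.length → lcpLen X Y < Y.length →
      X[lcpLen X Y]? ≠ Y[lcpLen X Y]?
  | [], Y, h1, _ => by simp [lcpLen_nil] at h1
  | _ :: _, [], _, h2 => by simp at h2
  | a :: s, b :: t, h1, h2 => by
      by_cases h : a = b
      · subst h
        simp only [lcpLen, if_pos rfl] at h1 h2 ⊢
        simpa using lcpLen_getElem_ne s t (by simpa using h1) (by simpa using h2)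
      · simp [lcpLen, h]
lemma suff_length {α : Type*} (T : ℕ → α) (n j : ℕ) : (suff T n j).length = n + 1 - j := by
  simp [suff, frag]

lemma tinf_length {α : Type*} (T : ℕ → α) (n j ℓ : ℕ) : (tinf T n j ℓ).length = ℓ := by
  simp [tinf]

lemma suff_getElem? {α : Type*} (T : ℕ → α) (n j t : ℕ) (ht : t < n + 1 - j) :
    (suff T n j)[t]? = some (T (j + t)) := by
  simp [suff, frag, List.getElem?_map, List.getElem?_range, ht]

lemma tinf_getElem? {α : Type*} (T : ℕ → α) (n j ℓ t : ℕ) (hj : 1 ≤ j) (hjn : j ≤ n)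
    (htℓ : t < ℓ) (htj : t < n + 1 - j) :
    (tinf T n j ℓ)[t]? = some (T (j + t)) := by
  have hmod : (j + t - 1) % n + 1 = j + t := by
    have h1 : j + t - 1 < n := by omega
    rw [Nat.mod_eq_of_lt h1]; omega
  simp [tinf, List.getElem?_map, List.getElem?_range, htℓ, hmod]

lemma lex_of_mismatch {α : Type*} [LinearOrder α] :
    ∀ (d : ℕ) (X Y : List α), (∀ t, t < d → X[t]? = Y[t]?) →
      ∀ x y : α, X[d]? = some x → Y[d]? = some y → x < y → List.Lex (· < ·) X Y
  | 0, X, Y, _, x, y, hx, hy, hxy => by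
      cases X with
      | nil => simp at hx
      | cons a s =>
        cases Y with
        | nil => simp at hy
        | cons b t =>
          simp only [List.getElem?_cons_zero, Option.some.injEq] at hx hy
          subst hx; subst hy
          exact List.Lex.rel hxy
  | d + 1, X, Y, hpre, x, y, hx, hy, hxy => by
      cases X with
      | nil => simp at hx
      | cons a s =>
        cases Y with
        | nil => simp at hy
        | cons b t =>
          have h0 := hpre 0 (Nat.succ_pos d)
          simp only [List.getElem?_cons_zero, Option.some.injEq] at h0
          subst h0
          refine List.Lex.cons ?_
          exact lex_of_mismatch d s t
            (fun k hk => by simpa using hpre (k + 1) (by omega)) x y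
            (by simpa using hx) (by simpa using hy) hxy
lemma lcp_lt_of_lt {α : Type*} [LinearOrder α] (T : ℕ → α) (n : ℕ)
    (hsent : ∀ i, 1 ≤ i → i < n → T n < T i) {j1 j2 : ℕ}
    (h1 : 1 ≤ j1) (h2 : j2 ≤ n) (h12 : j1 < j2) :
    lcpLen (suff T n j1) (suff T n j2) < n + 1 - j2 := by
  by_contra hcon
  push_neg at hcon
  have ht : n - j2 < lcpLen (suff T n j1) (suff T n j2) := by omega
  have he := lcpLen_getElem_eq (suff T n j1) (suff T n j2) (n - j2) ht
  rw [suff_getElem? T n j1 (n - j2) (by omega), suff_getElem? T n j2 (n - j2) (by omega)] at he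
  have heq : T (j1 + (n - j2)) = T (j2 + (n - j2)) := by
    simpa using he
  have hn2 : j2 + (n - j2) = n := by omega
  have hlt := hsent (j1 + (n - j2)) (by omega) (by omega)
  have hfin : ¬ T n < T (j1 + (n - j2)) := by rw [heq, hn2]; exact lt_irrefl _
  exact hfin hlt

lemma crux {α : Type*} [LinearOrder α] (T : ℕ → α) (n : ℕ)
    (hsent : ∀ i, 1 ≤ i → i < n → T n < T i) {j' j ℓ : ℕ}
    (hj'1 : 1 ≤ j') (hj'n : j' ≤ n) (hj1 : 1 ≤ j) (hjn : j ≤ n) :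
    (suff T n j' < suff T n j ∧ lcpLen (suff T n j') (suff T n j) < ℓ)
      ↔ tinf T n j' ℓ < tinf T n j ℓ := by
  set d := lcpLen (suff T n j') (suff T n j) with hdef
  -- facts under j' ≠ j
  have hboth : j' ≠ j → d < n + 1 - j' ∧ d < n + 1 - j := by
    intro hne
    rcases hne.lt_or_gt with h | h
    · have := lcp_lt_of_lt T n hsent hj'1 hjn h
      constructor <;> omega
    · have := lcp_lt_of_lt T n hsent hj1 hj'n h
      rw [lcpLen_comm] at this
      rw [← hdef] at this
      constructor <;> omega
  have hwin : ∀ t, t < d → t < ℓ → (tinf T n j' ℓ)[t]? = (tinf T n j ℓ)[t]? := by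
    intro t htd htℓ
    have hle := lcpLen_le (suff T n j') (suff T n j)
    rw [suff_length, suff_length] at hle
    have h1 : t < n + 1 - j' := by omega
    have h2 : t < n + 1 - j := by omega
    rw [tinf_getElem? T n j' ℓ t hj'1 hj'n htℓ h1, tinf_getElem? T n j ℓ t hj1 hjn htℓ h2]
    have := lcpLen_getElem_eq (suff T n j') (suff T n j) t htd
    rwa [suff_getElem? T n j' t h1, suff_getElem? T n j t h2] at this
  constructor
  · rintro ⟨hlt, hdℓ⟩
    have hne : j' ≠ j := by rintro rfl; exact lt_irrefl _ hlt
    obtain ⟨hd1, hd2⟩ := hboth hne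
    have hx := suff_getElem? T n j' d hd1
    have hy := suff_getElem? T n j d hd2
    have hch : T (j' + d) ≠ T (j + d) := by
      have hne' := lcpLen_getElem_ne (suff T n j') (suff T n j)
        (by rw [suff_length]; omega) (by rw [suff_length]; omega)
      rw [← hdef, hx, hy] at hne'
      intro h; exact hne' (by rw [h])
    have hxy : T (j' + d) < T (j + d) := by
      rcases hch.lt_or_gt with h | h
      · exact h
      · exfalso
        have : List.Lex (· < ·) (suff T n j) (suff T n j') :=
          lex_of_mismatch d _ _
            (fun t ht => (lcpLen_getElem_eq (suff T n j') (suff T n j) t ht).symm)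
            _ _ hy hx h
        exact asymm hlt this
    exact lex_of_mismatch d _ _ (fun t ht => hwin t ht (by omega)) _ _
      (tinf_getElem? T n j' ℓ d hj'1 hj'n hdℓ hd1)
      (tinf_getElem? T n j ℓ d hj1 hjn hdℓ hd2) hxy
  · intro hlt
    have hne : j' ≠ j := by rintro rfl; exact lt_irrefl _ hlt
    obtain ⟨hd1, hd2⟩ := hboth hne
    have hdℓ : d < ℓ := by
      by_contra hcon
      push_neg at hcon
      have heq : tinf T n j' ℓ = tinf T n j ℓ := by
        apply List.ext_getElem?
        intro t
        by_cases htℓ : t < ℓ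
        · exact hwin t (by omega) htℓ
        · rw [List.getElem?_eq_none (by rw [tinf_length]; omega),
            List.getElem?_eq_none (by rw [tinf_length]; omega)]
      rw [heq] at hlt
      exact lt_irrefl _ hlt
    have hx := suff_getElem? T n j' d hd1
    have hy := suff_getElem? T n j d hd2
    have hch : T (j' + d) ≠ T (j + d) := by
      have hne' := lcpLen_getElem_ne (suff T n j') (suff T n j)
        (by rw [suff_length]; omega) (by rw [suff_length]; omega)
      rw [← hdef, hx, hy] at hne'
      intro h; exact hne' (by rw [h])
    have hxy : T (j' + d) < T (j + d) := by
      rcases hch.lt_or_gt with h | h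
      · exact h
      · exfalso
        have : List.Lex (· < ·) (tinf T n j ℓ) (tinf T n j' ℓ) :=
          lex_of_mismatch d _ _ (fun t ht => (hwin t ht (by omega)).symm) _ _
            (tinf_getElem? T n j ℓ d hj1 hjn hdℓ hd2)
            (tinf_getElem? T n j' ℓ d hj'1 hj'n hdℓ hd1) h
        exact asymm hlt this
    exact ⟨lex_of_mismatch d _ _
      (fun t ht => lcpLen_getElem_eq (suff T n j') (suff T n j) t ht) _ _ hx hy hxy, hdℓ⟩


/-- Corollary `cor:lbub`: `RangeBeg_ℓ(j)`, i.e. the number of `j' ∈ [1..n]` with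
`T[j'..n] ≺ T[j..n]` and `LCE_T(j',j) < ℓ`, equals the number of `j' ∈ [1..n]` with
`T^∞[j'..j'+ℓ) ≺ T^∞[j..j+ℓ)`. -/
theorem rangeBeg_eq_window_count {α : Type*} [LinearOrder α] (T : ℕ → α) (n : ℕ) (hn : 1 ≤ n)
    (hsent : ∀ i, 1 ≤ i → i < n → T n < T i)
    (j ℓ : ℕ) (hj : 1 ≤ j) (hjn : j ≤ n) (hℓ : 1 ≤ ℓ) :
    {j' | 1 ≤ j' ∧ j' ≤ n ∧ suff T n j' < suff T n j ∧
        lcpLen (suff T n j') (suff T n j) < ℓ}.ncard =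
      {j' | 1 ≤ j' ∧ j' ≤ n ∧ tinf T n j' ℓ < tinf T n j ℓ}.ncard := by
  have hset : {j' | 1 ≤ j' ∧ j' ≤ n ∧ suff T n j' < suff T n j ∧
        lcpLen (suff T n j') (suff T n j) < ℓ} =
      {j' | 1 ≤ j' ∧ j' ≤ n ∧ tinf T n j' ℓ < tinf T n j ℓ} := by
    ext j'
    simp only [Set.mem_setOf_eq]
    constructor
    · rintro ⟨a, b, c, e⟩
      exact ⟨a, b, (crux T n hsent a b hj hjn).mp ⟨c, e⟩⟩
    · rintro ⟨a, b, c⟩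
      obtain ⟨c1, c2⟩ := (crux T n hsent a b hj hjn).mpr c
      exact ⟨a, b, c1, c2⟩
  rw [hset]
end

section
/- Let $S$ be a string of length $k$, $\tau \ge 1$, and suppose positions $j$ and $j'$ both lie in $\mathsf{R}(\tau,S)$ (i.e., $\mathrm{per}(S[j..j+3\tau-2]) \le \tau/3$ and similarly for $j'$), with the same period $p = \mathrm{per}(S[j..j+3\tau-2]) = \mathrm{per}(S[j'..j'+3\tau-2])$ and same head offset. If $\mathrm{type}(j) = -1$ and $\mathrm{type}(j') = +1$, then $S[j..k] \prec S[j'..k]$ lexicographically, where $\mathrm{type}(i)=+1$ if the maximal extension $S[i..e_i)$ of $S[i..i+3\tau-1)$ with period $p$ satisfies $e_i \le k$ and $S[e_i] \succ S[e_i - p]$, and $\mathrm{type}(i) = -1$ otherwise. -/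
lemma frag_getElem? {α : Type*} (T : ℕ → α) (a len t : ℕ) (h : t < len) :
    (frag T a len)[t]? = some (T (a + t)) := by
  simp [frag, List.getElem?_map, List.getElem?_range, h]

lemma frag_length {α : Type*} (T : ℕ → α) (a len : ℕ) : (frag T a len).length = len := by
  simp [frag]

lemma lcpLen_spec {α : Type*} [DecidableEq α] :
    ∀ (a b : List α) (i : ℕ), i < lcpLen a b → a[i]? = b[i]?
  | x :: s, y :: t, i, h => by
    by_cases hxy : x = y
    · simp only [lcpLen, if_pos hxy] at h
      cases i with
      | zero => simp [hxy]
      | succ n => simpa using lcpLen_spec s t n (by omega)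
    · simp [lcpLen, if_neg hxy] at h
  | [], b, i, h => by simp [lcpLen] at h
  | x :: s, [], i, h => by simp [lcpLen] at h

lemma list_lt_of_agree {α : Type*} [LinearOrder α] :
    ∀ (m : ℕ) (a b : List α),
      (∀ t, t < m → a[t]? = b[t]?) →
      ((a.length = m ∧ m < b.length) ∨ (∃ x y, a[m]? = some x ∧ b[m]? = some y ∧ x < y)) →
      a < b := by
  intro m
  induction m with
  | zero =>
    intro a b _ h
    rcases h with ⟨ha, hb⟩ | ⟨x, y, hx, hy, hxy⟩
    · rcases List.eq_nil_of_length_eq_zero ha with rfl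
      rcases b with _ | ⟨c, t⟩
      · simp at hb
      · exact List.nil_lt_cons c t
    · rcases a with _ | ⟨x', s⟩; · simp at hx
      rcases b with _ | ⟨y', t⟩; · simp at hy
      simp only [List.getElem?_cons_zero, Option.some.injEq] at hx hy
      subst hx; subst hy
      exact List.Lex.rel hxy
  | succ n ih =>
    intro a b hagree h
    have hal : 0 < a.length := by
      rcases h with ⟨ha, _⟩ | ⟨x, y, hx, _, _⟩
      · omega
      · have := (List.getElem?_eq_some_iff.mp hx).choose; omega
    have hbl : 0 < b.length := by
      rcases h with ⟨_, hb⟩ | ⟨x, y, _, hy, _⟩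
      · omega
      · have := (List.getElem?_eq_some_iff.mp hy).choose; omega
    rcases a with _ | ⟨x, s⟩; · simp at hal
    rcases b with _ | ⟨y, t⟩; · simp at hbl
    have h0 := hagree 0 (by omega)
    simp only [List.getElem?_cons_zero, Option.some.injEq] at h0
    subst h0
    refine List.Lex.cons (ih s t ?_ ?_)
    · intro i hi
      have := hagree (i + 1) (by omega)
      simpa using this
    · rcases h with ⟨ha, hb⟩ | ⟨x', y', hx, hy, hxy⟩
      · left; constructor <;> simp_all
      · right; exact ⟨x', y', by simpa using hx, by simpa using hy, hxy⟩

/-- Basic facts about `runEnd`: it lies in its defining set and is an upper bound. -/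
lemma runEnd_mem {α : Type*} (S : ℕ → α) (n i p : ℕ) (hin : i ≤ n + 1) (hp : 1 ≤ p) :
    i ≤ runEnd S n i p ∧ runEnd S n i p ≤ n + 1 ∧
      ∀ t, i ≤ t → t + p < runEnd S n i p → S t = S (t + p) := by
  have hne : (({e | i ≤ e ∧ e ≤ n + 1 ∧ ∀ t, i ≤ t → t + p < e → S t = S (t + p)}) : Set ℕ).Nonempty :=
    ⟨i, le_refl i, hin, fun t ht htp => by omega⟩
  have hbdd : BddAbove {e | i ≤ e ∧ e ≤ n + 1 ∧ ∀ t, i ≤ t → t + p < e → S t = S (t + p)} :=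
    ⟨n + 1, fun e he => he.2.1⟩
  exact Nat.sSup_mem hne hbdd

lemma le_runEnd {α : Type*} (S : ℕ → α) (n i p e : ℕ)
    (he : i ≤ e ∧ e ≤ n + 1 ∧ ∀ t, i ≤ t → t + p < e → S t = S (t + p)) :
    e ≤ runEnd S n i p :=
  le_csSup ⟨n + 1, fun x hx => hx.2.1⟩ he

/-- From the hypothesis that `per (frag S j (3τ-1)) = p` we get `1 ≤ p` and the
pointwise periodicity of `S` on the window. -/
lemma per_window {α : Type*} (S : ℕ → α) (j L p : ℕ) (hL : 1 ≤ L)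
    (hp : per (frag S j L) = p) :
    1 ≤ p ∧ ∀ t, j ≤ t → t + p < j + L → S t = S (t + p) := by
  have hne : ({q | 1 ≤ q ∧ hasPer (frag S j L) q} : Set ℕ).Nonempty := by
    refine ⟨L, hL, fun i hi => ?_⟩
    rw [frag_length] at hi; omega
  have hmem := Nat.sInf_mem hne
  rw [show sInf {q | 1 ≤ q ∧ hasPer (frag S j L) q} = per (frag S j L) from rfl, hp] at hmem
  obtain ⟨hp1, hper⟩ := hmem
  refine ⟨hp1, fun t ht htp => ?_⟩
  have hi : (t - j) + p < L := by omega
  have := hper (t - j) (by rw [frag_length]; omega)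
  rw [frag_getElem? _ _ _ _ (by omega), frag_getElem? _ _ _ _ (by omega)] at this
  have h1 : j + (t - j) = t := by omega
  have h2 : j + (t - j + p) = t + p := by omega
  rw [h1, h2] at this
  exact Option.some.injEq _ _ ▸ (by simpa using this)

/-- Lemma `lm:exp`(1): if `j, j' ∈ R(τ,S)` share the same shortest period `p`
(and, via `LCE_S(j,j') ≥ 3τ-1`, the same head), `type(j) = -1` and `type(j') = +1`,
then `S[j..k] ≺ S[j'..k]`.  Here `type(i) = +1` iff the maximal extension `S[i..e_i)`
with period `p` satisfies `e_i ≤ k` and `S[e_i] ≻ S[e_i - p]`, and `type(i) = -1`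
otherwise. -/
theorem type_neg_lt_type_pos {α : Type*} [LinearOrder α] (S : ℕ → α) (k τ : ℕ) (hτ : 1 ≤ τ)
    (j j' p : ℕ)
    (hj : 1 ≤ j) (hjk : j + 3 * τ ≤ k + 2) (hj' : 1 ≤ j') (hj'k : j' + 3 * τ ≤ k + 2)
    (hp : per (frag S j (3 * τ - 1)) = p) (hp' : per (frag S j' (3 * τ - 1)) = p)
    (hpτ : 3 * p ≤ τ)
    (hlce : 3 * τ - 1 ≤ lcpLen (suff S k j) (suff S k j'))
    (htypej : runEnd S k j p = k + 1 ∨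
      (runEnd S k j p ≤ k ∧ S (runEnd S k j p) < S (runEnd S k j p - p)))
    (htypej' : runEnd S k j' p ≤ k ∧ S (runEnd S k j' p - p) < S (runEnd S k j' p)) :
    suff S k j < suff S k j' := by
  obtain ⟨hp1, hwin⟩ := per_window S j (3 * τ - 1) p (by omega) hp
  obtain ⟨hp1', hwin'⟩ := per_window S j' (3 * τ - 1) p (by omega) hp'
  set e := runEnd S k j p with he_def
  set e' := runEnd S k j' p with he'_def
  obtain ⟨hje, hek1, hper⟩ := runEnd_mem S k j p (by omega) hp1
  obtain ⟨hje', hek1', hper'⟩ := runEnd_mem S k j' p (by omega) hp1'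
  -- the run extends at least over the whole window
  have hwine : j + (3 * τ - 1) ≤ e :=
    le_runEnd S k j p _ ⟨by omega, by omega, fun t ht htp => hwin t ht (by omega)⟩
  have hwine' : j' + (3 * τ - 1) ≤ e' :=
    le_runEnd S k j' p _ ⟨by omega, by omega, fun t ht htp => hwin' t ht (by omega)⟩
  -- characters agree via the LCE hypothesis
  have hlce' : ∀ t, t < 3 * τ - 1 → S (j + t) = S (j' + t) := by
    intro t ht
    have h1 := lcpLen_spec (suff S k j) (suff S k j') t (by omega)
    rw [suff, suff, frag_getElem? _ _ _ _ (by omega), frag_getElem? _ _ _ _ (by omega)] at h1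
    simpa using h1
  -- agreement while both runs continue
  have agree : ∀ t, j + t < e → j' + t < e' → S (j + t) = S (j' + t) := by
    intro t
    induction t using Nat.strong_induction_on with
    | _ t ih =>
      intro hte hte'
      by_cases hsmall : t < 3 * τ - 1
      · exact hlce' t hsmall
      · have hpt : p ≤ t := by omega
        have h1 : S (j + (t - p)) = S (j + t) := by
          have := hper (j + (t - p)) (by omega) (by omega)
          rwa [show j + (t - p) + p = j + t by omega] at this
        have h2 : S (j' + (t - p)) = S (j' + t) := by
          have := hper' (j' + (t - p)) (by omega) (by omega)
          rwa [show j' + (t - p) + p = j' + t by omega] at this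
        have h3 := ih (t - p) (by omega) (by omega) (by omega)
        rw [← h1, ← h2, h3]
  set L := e - j with hL_def
  set L' := e' - j' with hL'_def
  obtain ⟨he'k, hlt'⟩ := htypej'
  have hLτ : 3 * τ - 1 ≤ L := by omega
  have hL'τ : 3 * τ - 1 ≤ L' := by omega
  by_cases hLL' : L' < L
  · -- mismatch at position L'
    refine list_lt_of_agree L' _ _ ?_ (Or.inr ⟨S (j + L'), S (j' + L'), ?_, ?_, ?_⟩)
    · intro t ht
      rw [suff, suff, frag_getElem? _ _ _ _ (by omega), frag_getElem? _ _ _ _ (by omega),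
        agree t (by omega) (by omega)]
    · exact frag_getElem? _ _ _ _ (by omega)
    · exact frag_getElem? _ _ _ _ (by omega)
    · -- S (j + L') = S (j + L' - p) = S (j' + L' - p) = S (e' - p) < S e' = S (j' + L')
      have h1 : S (j + (L' - p)) = S (j + L') := by
        have := hper (j + (L' - p)) (by omega) (by omega)
        rwa [show j + (L' - p) + p = j + L' by omega] at this
      have h2 : S (j + (L' - p)) = S (j' + (L' - p)) :=
        agree (L' - p) (by omega) (by omega)
      have h3 : j' + (L' - p) = e' - p := by omega
      have h4 : j' + L' = e' := by omega
      rw [← h1, h2, h3, h4]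
      exact hlt'
  · -- L ≤ L'
    rcases htypej with hek | ⟨hek, hlt⟩
    · -- suff S k j is a strict prefix of suff S k j'
      refine list_lt_of_agree L _ _ ?_ (Or.inl ⟨?_, ?_⟩)
      · intro t ht
        rw [suff, suff, frag_getElem? _ _ _ _ (by omega), frag_getElem? _ _ _ _ (by omega),
          agree t (by omega) (by omega)]
      · rw [suff, frag_length]; omega
      · rw [suff, frag_length]; omega
    · -- mismatch at position L
      refine list_lt_of_agree L _ _ ?_ (Or.inr ⟨S (j + L), S (j' + L), ?_, ?_, ?_⟩)
      · intro t ht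
        rw [suff, suff, frag_getElem? _ _ _ _ (by omega), frag_getElem? _ _ _ _ (by omega),
          agree t (by omega) (by omega)]
      · exact frag_getElem? _ _ _ _ (by omega)
      · exact frag_getElem? _ _ _ _ (by omega)
      · have hjL : j + L = e := by omega
        have h1 : S (j + L) < S (j + (L - p)) := by
          rw [hjL, show j + (L - p) = e - p by omega]; exact hlt
        have h2 : S (j + (L - p)) = S (j' + (L - p)) :=
          agree (L - p) (by omega) (by omega)
        have h3 : S (j' + (L - p)) ≤ S (j' + L) := by
          rcases lt_or_eq_of_le (show j' + L ≤ e' by omega) with hlt2 | heq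
          · have := hper' (j' + (L - p)) (by omega) (by omega)
            rw [show j' + (L - p) + p = j' + L by omega] at this
            exact le_of_eq this
          · rw [show j' + (L - p) = e' - p by omega, heq]
            exact le_of_lt hlt'
        calc S (j + L) < S (j + (L - p)) := h1
          _ = S (j' + (L - p)) := h2
          _ ≤ S (j' + L) := h3
end
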